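/- Let k₁₊, k₂₋, k₂₊, ν be positive real numbers, set k₁₋ = 0, and define K₁±, K₂± as above. Then for every natural number n, ((K₂₋)_n (K₂₊)_n)/((K₁₋)_n (K₁₊)_n) · (νⁿ/n!) · ₂F₂({K₂₋+n, K₂₊+n},{K₁₋+n, K₁₊+n}, −ν) = (νⁿ (k₂₊)_n)/(n! (k₂₊+k₂₋)_n) · ₁F₁({k₂₊+n},{k₂₊+k₂₋+n}, −ν); that is, the steady-state mRNA distribution of the three-state gene model with k₁₋ = 0 coincides with that of the two-state gene model of Peccoud–Ycart with on/off rates k₂₊, k₂₋. -/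

import Mathlib

/-- The Pochhammer symbol (a)ₖ = a(a+1)⋯(a+k−1) for a real parameter. -/
noncomputable def poch (a : ℝ) (k : ℕ) : ℝ := (ascPochhammer ℝ k).eval a

/-- The generalized hypergeometric function ₂F₂({a₁,a₂},{b₁,b₂},x). -/
noncomputable def F22 (a₁ a₂ b₁ b₂ x : ℝ) : ℝ :=
  ∑' k : ℕ, (poch a₁ k * poch a₂ k) / (poch b₁ k * poch b₂ k) * x ^ k / (Nat.factorial k)

/-- The confluent hypergeometric function ₁F₁({a},{b},x). -/
noncomputable def F11 (a b x : ℝ) : ℝ :=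
  ∑' k : ℕ, poch a k / poch b k * x ^ k / (Nat.factorial k)

lemma poch_pos {a : ℝ} (ha : 0 < a) (k : ℕ) : 0 < poch a k := by
  induction k with
  | zero => simp [poch]
  | succ n ih =>
      have : poch a (n + 1) = poch a n * (a + n) := by
        simp [poch, ascPochhammer_succ_right]
      rw [this]
      positivity

/-- With k₁₋ = 0, the steady-state mRNA distribution of the three-state
gene model coincides with that of the two-state gene model of Peccoud–Ycart with on/off
rates k₂₊, k₂₋. -/
theorem three_state_reduces_to_two_state
    (k₁m k₁p k₂m k₂p ν : ℝ) (hk₁m : k₁m = 0) (hk₁p : 0 < k₁p)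
    (hk₂m : 0 < k₂m) (hk₂p : 0 < k₂p) (hν : 0 < ν)
    (κ₀ κ₁ κ₂ : ℝ)
    (hκ₀ : κ₀ = (k₁m + k₁p) * k₂m + k₁p * k₂p)
    (hκ₁ : κ₁ = k₁m + k₁p + k₂m + k₂p)
    (hκ₂ : κ₂ = κ₁ - k₂m)
    (K₁m K₁p K₂m K₂p : ℝ)
    (hK₁m : K₁m = (κ₁ - Real.sqrt (κ₁ ^ 2 - 4 * κ₀)) / 2)
    (hK₁p : K₁p = (κ₁ + Real.sqrt (κ₁ ^ 2 - 4 * κ₀)) / 2)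
    (hK₂m : K₂m = (κ₂ - Real.sqrt (κ₂ ^ 2 - 4 * (k₁p * k₂p))) / 2)
    (hK₂p : K₂p = (κ₂ + Real.sqrt (κ₂ ^ 2 - 4 * (k₁p * k₂p))) / 2) :
    ∀ n : ℕ,
      (poch K₂m n * poch K₂p n) / (poch K₁m n * poch K₁p n)
          * (ν ^ n / (Nat.factorial n))
          * F22 (K₂m + n) (K₂p + n) (K₁m + n) (K₁p + n) (-ν)
        = (ν ^ n * poch k₂p n) / ((Nat.factorial n) * poch (k₂p + k₂m) n)
          * F11 (k₂p + n) (k₂p + k₂m + n) (-ν) := by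
  subst hk₁m hκ₀ hκ₁ hκ₂
  -- identify the square roots
  have hs2 : Real.sqrt ((0 + k₁p + k₂m + k₂p - k₂m) ^ 2 - 4 * (k₁p * k₂p))
      = |k₁p - k₂p| := by
    have h : (0 + k₁p + k₂m + k₂p - k₂m) ^ 2 - 4 * (k₁p * k₂p) = (k₁p - k₂p) ^ 2 := by
      ring
    rw [h, Real.sqrt_sq_eq_abs]
  have hs1 : Real.sqrt ((0 + k₁p + k₂m + k₂p) ^ 2 - 4 * ((0 + k₁p) * k₂m + k₁p * k₂p))
      = |k₁p - (k₂m + k₂p)| := by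
    have h : (0 + k₁p + k₂m + k₂p) ^ 2 - 4 * ((0 + k₁p) * k₂m + k₁p * k₂p)
        = (k₁p - (k₂m + k₂p)) ^ 2 := by ring
    rw [h, Real.sqrt_sq_eq_abs]
  have h2 : (K₂m = k₁p ∧ K₂p = k₂p) ∨ (K₂m = k₂p ∧ K₂p = k₁p) := by
    rcases le_total k₁p k₂p with h | h
    · left
      constructor
      · rw [hK₂m, hs2, abs_of_nonpos (by linarith)]; ring
      · rw [hK₂p, hs2, abs_of_nonpos (by linarith)]; ring
    · right
      constructor
      · rw [hK₂m, hs2, abs_of_nonneg (by linarith)]; ring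
      · rw [hK₂p, hs2, abs_of_nonneg (by linarith)]; ring
  have h1 : (K₁m = k₁p ∧ K₁p = k₂m + k₂p) ∨ (K₁m = k₂m + k₂p ∧ K₁p = k₁p) := by
    rcases le_total k₁p (k₂m + k₂p) with h | h
    · left
      constructor
      · rw [hK₁m, hs1, abs_of_nonpos (by linarith)]; ring
      · rw [hK₁p, hs1, abs_of_nonpos (by linarith)]; ring
    · right
      constructor
      · rw [hK₁m, hs1, abs_of_nonneg (by linarith)]; ring
      · rw [hK₁p, hs1, abs_of_nonneg (by linarith)]; ring
  have p2 : ∀ a : ℝ, ∀ k : ℕ,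
      poch (K₂m + a) k * poch (K₂p + a) k = poch (k₁p + a) k * poch (k₂p + a) k := by
    rcases h2 with ⟨e1, e2⟩ | ⟨e1, e2⟩ <;> subst e1 e2 <;> intro a k <;> ring
  have p1 : ∀ a : ℝ, ∀ k : ℕ,
      poch (K₁m + a) k * poch (K₁p + a) k
        = poch (k₁p + a) k * poch (k₂m + k₂p + a) k := by
    rcases h1 with ⟨e1, e2⟩ | ⟨e1, e2⟩ <;> subst e1 e2 <;> intro a k <;> ring
  intro n
  have hF : F22 (K₂m + n) (K₂p + n) (K₁m + n) (K₁p + n) (-ν)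
      = F11 (k₂p + n) (k₂p + k₂m + n) (-ν) := by
    unfold F22 F11
    refine tsum_congr fun k => ?_
    rw [p2 n k, p1 n k]
    have hpos : (0:ℝ) < poch (k₁p + n) k := poch_pos (by positivity) k
    rw [mul_div_mul_left _ _ (ne_of_gt hpos)]
    have : k₂m + k₂p + (n:ℝ) = k₂p + k₂m + n := by ring
    rw [this]
  rw [hF]
  have e2 : poch K₂m n * poch K₂p n = poch k₁p n * poch k₂p n := by
    have := p2 0 n; simpa using this
  have e1 : poch K₁m n * poch K₁p n = poch k₁p n * poch (k₂m + k₂p) n := by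
    have := p1 0 n; simpa using this
  rw [e1, e2, mul_div_mul_left _ _ (ne_of_gt (poch_pos hk₁p n))]
  have : k₂m + k₂p = k₂p + k₂m := by ring
  rw [this]
  have hq : (0:ℝ) < poch (k₂p + k₂m) n := poch_pos (by positivity) n
  field_simp
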